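/- arXiv:1406.7730 — 5 statements merged into one kernel-verified Lean document; each statement's English description precedes it below -/
import Mathlib

section
/- Let S be a compact Hausdorff space with an associative operation * continuous in the left argument, let M be a minimal left ideal of S (a minimal nonempty subset with S*M ⊆ M that is closed), and let u ∈ M be an idempotent. Then u*M, with the operation *, is a group whose identity element is u. -/
/-! For `a ∈ M`, the set `S * a` is a closed left ideal inside `M` (closed as a compact image of the
continuous map `p ↦ p * a`), so minimality gives `S * a = M`. In particular every `a ∈ uM` has some
`s` with `s * a = u`, and then `u * s * u ∈ uM` is a left inverse of `a`. A semigroup with a left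
identity in which every element has a left inverse is a group. -/

section Semigroup

variable {S : Type*} [Semigroup S]

theorem exists_inv_of_exists_left_inv {G : Set S} {u : S}
    (hmul : ∀ a ∈ G, ∀ b ∈ G, a * b ∈ G) (hone_mul : ∀ a ∈ G, u * a = a)
    (hleft : ∀ a ∈ G, ∃ b ∈ G, b * a = u) :
    ∀ a ∈ G, ∃ b ∈ G, a * b = u ∧ b * a = u := by
  intro a ha
  obtain ⟨b, hb, hba⟩ := hleft a ha
  obtain ⟨c, -, hcb⟩ := hleft b hb
  refine ⟨b, hb, ?_, hba⟩
  calc a * b = u * (a * b) := (hone_mul _ (hmul a ha b hb)).symm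
    _ = c * (b * a * b) := by rw [← hcb, mul_assoc, mul_assoc]
    _ = u := by rw [hba, hone_mul b hb, hcb]

theorem mul_eq_self_of_inverse_of_one_mul {a b u : S} (hab : a * b = u) (hba : b * a = u)
    (hua : u * a = a) : a * u = a := by
  rw [← hba, ← mul_assoc, hab, hua]

variable {M : Set S} {u : S}

theorem image_mul_left_subset (hideal : ∀ s : S, ∀ m ∈ M, s * m ∈ M) :
    (u * ·) '' M ⊆ M :=
  Set.image_subset_iff.2 (hideal u)

theorem mul_mem_image_mul_left (hideal : ∀ s : S, ∀ m ∈ M, s * m ∈ M) {a b : S}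
    (ha : a ∈ (u * ·) '' M) (hb : b ∈ M) : a * b ∈ (u * ·) '' M := by
  obtain ⟨m, hm, rfl⟩ := ha
  exact ⟨m * b, hideal m b hb, (mul_assoc u m b).symm⟩

theorem mul_eq_self_of_mem_image_mul_left (hidem : u * u = u) {a : S}
    (ha : a ∈ (u * ·) '' M) : u * a = a := by
  obtain ⟨m, -, rfl⟩ := ha
  rw [← mul_assoc, hidem]

theorem exists_left_inv_of_mem_image_mul_left (hideal : ∀ s : S, ∀ m ∈ M, s * m ∈ M)
    (huM : u ∈ M) (hidem : u * u = u) {a s : S} (ha : a ∈ (u * ·) '' M) (hs : s * a = u) :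
    ∃ b ∈ (u * ·) '' M, b * a = u :=
  ⟨u * (s * u), ⟨s * u, hideal s u huM, rfl⟩, by
    rw [mul_assoc, mul_assoc, mul_eq_self_of_mem_image_mul_left hidem ha, hs, hidem]⟩

end Semigroup

theorem range_mul_right_eq_of_minimal {S : Type*} [TopologicalSpace S] [CompactSpace S]
    [T2Space S] [Semigroup S] {M : Set S} (hideal : ∀ s : S, ∀ m ∈ M, s * m ∈ M)
    (hmin : ∀ I : Set S, I ⊆ M → I.Nonempty → IsClosed I →
      (∀ s : S, ∀ x ∈ I, s * x ∈ I) → I = M)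
    {a : S} (ha : a ∈ M) (hcont : Continuous fun p : S => p * a) :
    Set.range (· * a) = M := by
  refine hmin _ (Set.range_subset_iff.2 fun s => hideal s a ha) ⟨a * a, a, rfl⟩
    (isCompact_range hcont).isClosed ?_
  rintro s _ ⟨t, rfl⟩
  exact ⟨s * t, mul_assoc s t a⟩

theorem uM_is_group_of_minimal_left_ideal_general
    (S : Type*) [TopologicalSpace S] [CompactSpace S] [T2Space S] [Mul S]
    (hassoc : ∀ p q r : S, p * q * r = p * (q * r))
    (hcont : ∀ q : S, Continuous fun p : S => p * q)
    (M : Set S)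
    (hideal : ∀ s : S, ∀ m ∈ M, s * m ∈ M)
    (hmin : ∀ I : Set S, I ⊆ M → I.Nonempty → IsClosed I →
      (∀ s : S, ∀ x ∈ I, s * x ∈ I) → I = M)
    (u : S) (huM : u ∈ M) (hidem : u * u = u) :
    (u ∈ (fun m => u * m) '' M) ∧
    (∀ a ∈ (fun m => u * m) '' M, ∀ b ∈ (fun m => u * m) '' M,
      a * b ∈ (fun m => u * m) '' M) ∧
    (∀ a ∈ (fun m => u * m) '' M, u * a = a ∧ a * u = a) ∧
    (∀ a ∈ (fun m => u * m) '' M, ∃ b ∈ (fun m => u * m) '' M,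
      a * b = u ∧ b * a = u) := by
  let _ : Semigroup S := { mul_assoc := hassoc }
  have hmul : ∀ a ∈ (u * ·) '' M, ∀ b ∈ (u * ·) '' M, a * b ∈ (u * ·) '' M :=
    fun a ha b hb => mul_mem_image_mul_left hideal ha (image_mul_left_subset hideal hb)
  have hone_mul : ∀ a ∈ (u * ·) '' M, u * a = a :=
    fun a => mul_eq_self_of_mem_image_mul_left hidem
  have hinv := exists_inv_of_exists_left_inv hmul hone_mul fun a ha => by
    have hu : u ∈ Set.range (· * a) := by
      rwa [range_mul_right_eq_of_minimal hideal hmin (image_mul_left_subset hideal ha) (hcont a)]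
    obtain ⟨s, hs⟩ := hu
    exact exists_left_inv_of_mem_image_mul_left hideal huM hidem ha hs
  refine ⟨⟨u, huM, hidem⟩, hmul, fun a ha => ⟨hone_mul a ha, ?_⟩, hinv⟩
  obtain ⟨b, -, hab, hba⟩ := hinv a ha
  exact mul_eq_self_of_inverse_of_one_mul hab hba (hone_mul a ha)

/-- If `M` is a minimal (closed) left ideal of a compact right topological semigroup `S`
and `u ∈ M` is an idempotent, then `u*M` is a group under `*` with identity `u`. -/
theorem uM_is_group_of_minimal_left_ideal
    (S : Type*) [TopologicalSpace S] [CompactSpace S] [T2Space S] [Mul S]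
    (hassoc : ∀ p q r : S, p * q * r = p * (q * r))
    (hcont : ∀ q : S, Continuous fun p : S => p * q)
    (M : Set S) (hne : M.Nonempty) (hclosed : IsClosed M)
    (hideal : ∀ s : S, ∀ m ∈ M, s * m ∈ M)
    (hmin : ∀ I : Set S, I ⊆ M → I.Nonempty → IsClosed I →
      (∀ s : S, ∀ x ∈ I, s * x ∈ I) → I = M)
    (u : S) (huM : u ∈ M) (hidem : u * u = u) :
    (u ∈ (fun m => u * m) '' M) ∧
    (∀ a ∈ (fun m => u * m) '' M, ∀ b ∈ (fun m => u * m) '' M,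
      a * b ∈ (fun m => u * m) '' M) ∧
    (∀ a ∈ (fun m => u * m) '' M, u * a = a ∧ a * u = a) ∧
    (∀ a ∈ (fun m => u * m) '' M, ∃ b ∈ (fun m => u * m) '' M,
      a * b = u ∧ b * a = u) :=
  uM_is_group_of_minimal_left_ideal_general S hassoc hcont M hideal hmin u huM hidem
end

section
/- Let cl_τ be a closure operator on the group uM = u*M (the Ellis group of a flow) such that cl_τ is idempotent, monotone, preserves finite unions, satisfies A ⊆ cl_τ(A), and multiplication on uM is continuous in each variable separately for the induced τ-topology, which is compact and T₁. Define H(uM) as the intersection of cl_τ(V) over all τ-neighborhoods V of the identity u. Then H(uM) is a τ-closed normal subgroup of uM. -/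
open Set Topology

def nhdsClosureKer {X : Type*} [TopologicalSpace X] (x : X) : Set X :=
  ⋂ V ∈ 𝓝 x, closure V

section nhdsClosureKer

variable {X Y : Type*} [TopologicalSpace X] [TopologicalSpace Y]

theorem mem_nhdsClosureKer {x y : X} : y ∈ nhdsClosureKer x ↔ ∀ V ∈ 𝓝 x, y ∈ closure V :=
  mem_iInter₂

theorem isClosed_nhdsClosureKer (x : X) : IsClosed (nhdsClosureKer x) :=
  isClosed_biInter fun _ _ => isClosed_closure

theorem mem_nhdsClosureKer_self (x : X) : x ∈ nhdsClosureKer x :=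
  mem_nhdsClosureKer.2 fun _ hV => subset_closure (mem_of_mem_nhds hV)

theorem Continuous.mapsTo_nhdsClosureKer {f : X → Y} (hf : Continuous f) {x : X} {y : Y}
    (hxy : f x = y) : MapsTo f (nhdsClosureKer x) (nhdsClosureKer y) := by
  intro z hz
  refine mem_nhdsClosureKer.2 fun V hV => ?_
  have hpre : f ⁻¹' V ∈ 𝓝 x := hf.continuousAt.preimage_mem_nhds (hxy ▸ hV)
  exact hf.closure_preimage_subset V (mem_nhdsClosureKer.1 hz _ hpre)

end nhdsClosureKer

section SeparatelyContinuousMul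

variable {K : Type*} [Group K] [TopologicalSpace K]

theorem mul_mem_closure_of_mem_nhdsClosureKer_one {a y : K} {W : Set K}
    (hr : Continuous fun x : K => x * y) (ha : a ∈ nhdsClosureKer (1 : K))
    (hW : IsOpen W) (hy : y ∈ W) : a * y ∈ closure W := by
  have hpre : (fun x : K => x * y) ⁻¹' W ∈ 𝓝 (1 : K) :=
    (hW.preimage hr).mem_nhds (by simpa using hy)
  exact hr.closure_preimage_subset W (mem_nhdsClosureKer.1 ha _ hpre)

theorem mul_mem_nhdsClosureKer_one (hl : ∀ a : K, Continuous fun x : K => a * x)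
    (hr : ∀ a : K, Continuous fun x : K => x * a) {a b : K}
    (ha : a ∈ nhdsClosureKer (1 : K)) (hb : b ∈ nhdsClosureKer (1 : K)) :
    a * b ∈ nhdsClosureKer (1 : K) := by
  refine mem_nhdsClosureKer.2 fun V hV => closure_mono interior_subset ?_
  -- With `W = interior V`: `a * W ⊆ closure W` pointwise, and this passes to `closure W`
  -- because left multiplication by `a` is continuous.
  have hmaps : closure (interior V) ⊆ (fun x : K => a * x) ⁻¹' closure (interior V) :=
    closure_minimal
      (fun y hy => mul_mem_closure_of_mem_nhdsClosureKer_one (hr y) ha isOpen_interior hy)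
      (isClosed_closure.preimage (hl a))
  exact hmaps (mem_nhdsClosureKer.1 hb _ (interior_mem_nhds.2 hV))

end SeparatelyContinuousMul

theorem H_uM_is_closed_normal_subgroup_general
    (K : Type*) [Group K] [TopologicalSpace K]
    (hl : ∀ a : K, Continuous fun x : K => a * x)
    (hr : ∀ a : K, Continuous fun x : K => x * a)
    (hinv : Continuous fun x : K => x⁻¹) :
    IsClosed (⋂ V ∈ nhds (1 : K), closure V) ∧
    (1 : K) ∈ (⋂ V ∈ nhds (1 : K), closure V) ∧
    (∀ a ∈ (⋂ V ∈ nhds (1 : K), closure V), a⁻¹ ∈ (⋂ V ∈ nhds (1 : K), closure V)) ∧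
    (∀ a ∈ (⋂ V ∈ nhds (1 : K), closure V), ∀ b ∈ (⋂ V ∈ nhds (1 : K), closure V),
      a * b ∈ (⋂ V ∈ nhds (1 : K), closure V)) ∧
    (∀ g : K, ∀ a ∈ (⋂ V ∈ nhds (1 : K), closure V),
      g * a * g⁻¹ ∈ (⋂ V ∈ nhds (1 : K), closure V)) := by
  have hconj (g : K) : Continuous fun x : K => g * x * g⁻¹ := (hr g⁻¹).comp (hl g)
  exact ⟨isClosed_nhdsClosureKer 1, mem_nhdsClosureKer_self 1,
    fun a ha => hinv.mapsTo_nhdsClosureKer inv_one ha,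
    fun a ha b hb => mul_mem_nhdsClosureKer_one hl hr ha hb,
    fun g a ha => (hconj g).mapsTo_nhdsClosureKer (by simp) ha⟩

/-- Let `K` be a group (such as the Ellis group `uM`) with a compact `T₁` topology (induced
by the `τ`-closure operator) in which multiplication is continuous in each variable
separately and inversion is continuous. Let `H` be the intersection of the closures of all
neighborhoods of the identity. Then `H` is a closed normal subgroup of `K`. -/
theorem H_uM_is_closed_normal_subgroup
    (K : Type*) [Group K] [TopologicalSpace K] [CompactSpace K] [T1Space K]
    (hl : ∀ a : K, Continuous fun x : K => a * x)
    (hr : ∀ a : K, Continuous fun x : K => x * a)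
    (hinv : Continuous fun x : K => x⁻¹) :
    IsClosed (⋂ V ∈ nhds (1 : K), closure V) ∧
    (1 : K) ∈ (⋂ V ∈ nhds (1 : K), closure V) ∧
    (∀ a ∈ (⋂ V ∈ nhds (1 : K), closure V), a⁻¹ ∈ (⋂ V ∈ nhds (1 : K), closure V)) ∧
    (∀ a ∈ (⋂ V ∈ nhds (1 : K), closure V), ∀ b ∈ (⋂ V ∈ nhds (1 : K), closure V),
      a * b ∈ (⋂ V ∈ nhds (1 : K), closure V)) ∧
    (∀ g : K, ∀ a ∈ (⋂ V ∈ nhds (1 : K), closure V),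
      g * a * g⁻¹ ∈ (⋂ V ∈ nhds (1 : K), closure V)) :=
  H_uM_is_closed_normal_subgroup_general K hl hr hinv
end

section
/- Let K be a group with a compact T₁ topology in which multiplication is separately continuous and inversion is continuous. Let H be the intersection of the closures of all neighborhoods of the identity, and assume H is a closed normal subgroup such that the quotient K/H with the quotient topology is a compact Hausdorff topological group. Then for a closed subgroup F of K, the quotient space K/F is Hausdorff if and only if H ⊆ F. -/
/-!
A continuous map into a Hausdorff space identifies `g` with `1` whenever `g` lies in the
closure of every neighbourhood of `1`; applied to `K → K/F` this gives `H ≤ F`. Conversely,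
if `H ≤ F` then `F` is the preimage of its image `F/H` in the Hausdorff group `K/H`; as the
image of a closed subset of the compact space `K`, `F/H` is compact hence closed, so `K/F`
injects continuously into the Hausdorff coset space `(K/H)/(F/H)`.
-/

open Topology

theorem ClusterPt.eq_of_continuous {X Y : Type*} [TopologicalSpace X] [TopologicalSpace Y]
    [T2Space Y] {f : X → Y} (hf : Continuous f) {x y : X} (h : ClusterPt x (𝓝 y)) :
    f x = f y :=
  eq_of_nhds_neBot (h.map hf.continuousAt (hf.tendsto y))

namespace QuotientGroup

variable {G : Type*} [Group G] [TopologicalSpace G]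

theorem mem_of_clusterPt_nhds_one {F : Subgroup G} [T2Space (G ⧸ F)] {g : G}
    (hg : ClusterPt g (𝓝 1)) : g ∈ F := by
  have hmk : (g : G ⧸ F) = ((1 : G) : G ⧸ F) := hg.eq_of_continuous continuous_mk
  simpa using QuotientGroup.eq.mp hmk.symm

theorem t2Space_comap {G' : Type*} [Group G'] [TopologicalSpace G'] {f : G →* G'}
    (hf : Continuous f) (F' : Subgroup G') [T2Space (G' ⧸ F')] :
    T2Space (G ⧸ F'.comap f) := by
  let φ : G ⧸ F'.comap f → G' ⧸ F' := Quotient.map' f fun a b hab => by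
    rw [leftRel_apply] at hab ⊢
    simpa using hab
  have hφ : Function.Injective φ := by
    refine fun x y => Quotient.inductionOn₂' x y fun a b hab => Quotient.sound' ?_
    have hab' := QuotientGroup.eq.mp hab
    rw [leftRel_apply, Subgroup.mem_comap]
    simpa using hab'
  exact .of_injective_continuous hφ (hf.quotient_map' _)

end QuotientGroup

theorem quotient_hausdorff_iff_contains_H_general
    (K : Type*) [Group K] [TopologicalSpace K] [CompactSpace K]
    (H : Subgroup K) [H.Normal]
    (hH : (H : Set K) = ⋂ V ∈ nhds (1 : K), closure V)
    (hT2 : T2Space (K ⧸ H))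
    (htopgrp : IsTopologicalGroup (K ⧸ H)) :
    ∀ F : Subgroup K, IsClosed (F : Set K) → (T2Space (K ⧸ F) ↔ H ≤ F) := by
  intro F hF
  constructor
  · intro hF2 h hh
    have hcl : h ∈ ⋂ V ∈ 𝓝 (1 : K), closure V := hH ▸ hh
    exact QuotientGroup.mem_of_clusterPt_nhds_one
      (clusterPt_iff_forall_mem_closure.mpr (by simpa using hcl))
  · intro hHF
    let F' : Subgroup (K ⧸ H) := F.map (QuotientGroup.mk' H)
    have hF'closed : IsClosed (F' : Set (K ⧸ H)) := by
      rw [Subgroup.coe_map]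
      exact (hF.isCompact.image QuotientGroup.continuous_mk).isClosed
    have hcomap : F'.comap (QuotientGroup.mk' H) = F := by
      rw [Subgroup.comap_map_eq, QuotientGroup.ker_mk', sup_eq_left.mpr hHF]
    rw [← hcomap]
    exact QuotientGroup.t2Space_comap QuotientGroup.continuous_mk F'

/-- Let `K` be a group with a compact `T₁` topology, multiplication separately continuous
and inversion continuous. Let `H` be the (normal, closed) subgroup whose underlying set is
the intersection of the closures of all neighborhoods of the identity, and suppose the
quotient `K/H` (with the quotient topology) is a compact Hausdorff topological group. Then
for any closed subgroup `F` of `K`, the quotient space `K/F` is Hausdorff iff `H ≤ F`. -/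
theorem quotient_hausdorff_iff_contains_H
    (K : Type*) [Group K] [TopologicalSpace K] [CompactSpace K] [T1Space K]
    (hl : ∀ a : K, Continuous fun x : K => a * x)
    (hr : ∀ a : K, Continuous fun x : K => x * a)
    (hinv : Continuous fun x : K => x⁻¹)
    (H : Subgroup K) [H.Normal]
    (hH : (H : Set K) = ⋂ V ∈ nhds (1 : K), closure V)
    (hHclosed : IsClosed (H : Set K))
    (hcompact : CompactSpace (K ⧸ H)) (hT2 : T2Space (K ⧸ H))
    (htopgrp : IsTopologicalGroup (K ⧸ H)) :
    ∀ F : Subgroup K, IsClosed (F : Set K) → (T2Space (K ⧸ F) ↔ H ≤ F) :=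
  quotient_hausdorff_iff_contains_H_general K H hH hT2 htopgrp
end

section
/- Let G be a group acting by homeomorphisms on compact Hausdorff proximal minimal flows X and Y, where a flow is proximal if for any two points x, y there is a net (g_i) in G with lim g_i·x = lim g_i·y. Then any endomorphism of the minimal proximal flow X (continuous G-equivariant map X → X) is the identity. -/
/-!
Proximality of `x` and `φ x` yields a common limit `z` of `g i • x` and `g i • φ x`; by
continuity and equivariance the second net is `φ (g i • x)`, which also tends to `φ z`, so `z`
is a fixed point of `φ`. Fixed points of an equivariant map form a `G`-invariant set, closed by
continuity, so minimality spreads `φ z = z` from the orbit of `z` to all of `X`.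
-/

open Filter Topology Function

section Equivariant

variable {G X : Type*} [Monoid G] [TopologicalSpace X] [T2Space X] [MulAction G X] {φ : X → X}

theorem isFixedPt_of_tendsto_smul_of_tendsto_smul (hφ : Continuous φ)
    (hequiv : ∀ (g : G) (x : X), φ (g • x) = g • φ x) {ι : Type*} {l : Filter ι} [l.NeBot]
    {g : ι → G} {x z : X} (hx : Tendsto (fun i => g i • x) l (𝓝 z))
    (hφx : Tendsto (fun i => g i • φ x) l (𝓝 z)) : IsFixedPt φ z := by
  have hφ_lim : Tendsto (fun i => φ (g i • x)) l (𝓝 (φ z)) := (hφ.tendsto z).comp hx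
  simp only [hequiv] at hφ_lim
  exact tendsto_nhds_unique hφ_lim hφx

theorem eq_id_of_isFixedPt_of_dense_orbit (hφ : Continuous φ)
    (hequiv : ∀ (g : G) (x : X), φ (g • x) = g • φ x) {z : X} (hz : IsFixedPt φ z)
    (hdense : Dense (Set.range fun g : G => g • z)) : φ = id := by
  have horbit : Set.range (fun g : G => g • z) ⊆ fixedPoints φ := by
    rintro _ ⟨g, rfl⟩
    exact (hequiv g z).trans (congrArg (g • ·) hz)
  funext x
  exact (isClosed_fixedPoints hφ).closure_subset_iff.mpr horbit (hdense x)

end Equivariant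

theorem endomorphism_of_minimal_proximal_flow_is_identity_general
    (G : Type*) [Group G]
    (X : Type*) [TopologicalSpace X] [T2Space X] [MulAction G X]
    (hminimal : ∀ x : X, Dense (Set.range fun g : G => g • x))
    (hproximal : ∀ x y : X, ∃ (ι : Type) (l : Filter ι), l.NeBot ∧
      ∃ (g : ι → G) (z : X),
        Tendsto (fun i => g i • x) l (𝓝 z) ∧ Tendsto (fun i => g i • y) l (𝓝 z)) :
    ∀ φ : X → X, Continuous φ → (∀ (g : G) (x : X), φ (g • x) = g • φ x) →
      φ = id := by
  intro φ hφ hequiv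
  funext x
  obtain ⟨ι, l, hl, g, z, hx, hφx⟩ := hproximal x (φ x)
  have hz : IsFixedPt φ z := isFixedPt_of_tendsto_smul_of_tendsto_smul hφ hequiv hx hφx
  exact congrFun (eq_id_of_isFixedPt_of_dense_orbit hφ hequiv hz (hminimal z)) x

/-- Every endomorphism (continuous `G`-equivariant self-map) of a minimal proximal compact
Hausdorff `G`-flow is the identity. -/
theorem endomorphism_of_minimal_proximal_flow_is_identity
    (G : Type*) [Group G]
    (X : Type*) [TopologicalSpace X] [CompactSpace X] [T2Space X] [MulAction G X]
    (hcont : ∀ g : G, Continuous fun x : X => g • x)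
    (hminimal : ∀ x : X, Dense (Set.range fun g : G => g • x))
    (hproximal : ∀ x y : X, ∃ (ι : Type) (l : Filter ι), l.NeBot ∧
      ∃ (g : ι → G) (z : X),
        Tendsto (fun i => g i • x) l (𝓝 z) ∧ Tendsto (fun i => g i • y) l (𝓝 z)) :
    ∀ φ : X → X, Continuous φ → (∀ (g : G) (x : X), φ (g • x) = g • φ x) →
      φ = id :=
  endomorphism_of_minimal_proximal_flow_is_identity_general G X hminimal hproximal
end

section
/- Let X be a compact Hausdorff space on which a group G acts by homeomorphisms, and suppose the flow (G, X) is equicontinuous. Then the Ellis semigroup E(X) (the closure in X^X of the set of translation maps x ↦ g·x) is a group consisting of homeomorphisms of X, and composition on E(X) is jointly continuous, making E(X) a compact Hausdorff topological group. -/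
/-!
Equicontinuity of the translations passes to their pointwise closure `E`, and on an equicontinuous
family evaluation, hence composition, is jointly continuous. So composition maps `E × E` into `E`.
For inverses, take the closure of the graph `{(g, g⁻¹)}` in the compact space `E × E`: its first
projection is compact and contains all translations, so every `f ∈ E` has a partner `h` with
`(f, h)` in that closure; by continuity `f ∘ h = id`, and the graph is symmetric, so `h ∘ f = id`.
-/

open Set Filter Topology

section Equicontinuous

variable {X Y Z : Type*} [TopologicalSpace Y] [UniformSpace Z]

theorem Set.Equicontinuous.continuousOn_eval {A : Set (Y → Z)} (hA : A.Equicontinuous) :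
    ContinuousOn (fun p : (Y → Z) × Y => p.1 p.2) (A ×ˢ univ) := by
  rintro ⟨f, y⟩ -
  rw [ContinuousWithinAt, Uniform.tendsto_nhds_right]
  intro U hU
  rw [mem_map]
  obtain ⟨V, hV, hVU⟩ := comp_mem_uniformity_sets hU
  have hfst : ∀ᶠ p : (Y → Z) × Y in 𝓝[A ×ˢ univ] (f, y), (f y, p.1 y) ∈ V :=
    (((continuous_apply y).comp continuous_fst).tendsto (f, y)).mono_left nhdsWithin_le_nhds
      |>.eventually (UniformSpace.ball_mem_nhds (f y) hV)
  have hsnd : ∀ᶠ p : (Y → Z) × Y in 𝓝[A ×ˢ univ] (f, y), ∀ u : A, (u.1 y, u.1 p.2) ∈ V :=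
    (continuous_snd.tendsto (f, y)).mono_left nhdsWithin_le_nhds |>.eventually (hA y V hV)
  filter_upwards [hfst, hsnd, self_mem_nhdsWithin] with p h₁ h₂ hp
  exact hVU (SetRel.prodMk_mem_comp h₁ (h₂ ⟨p.1, hp.1⟩))

theorem Set.Equicontinuous.continuousOn_comp {A : Set (Y → Z)} (hA : A.Equicontinuous) :
    ContinuousOn (fun p : (Y → Z) × (X → Y) => p.1 ∘ p.2) (A ×ˢ univ) := by
  refine continuousOn_pi.2 fun x => ?_
  exact hA.continuousOn_eval.comp (f := fun p : (Y → Z) × (X → Y) => (p.1, p.2 x))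
    (continuous_fst.prodMk ((continuous_apply x).comp continuous_snd)).continuousOn
    fun p hp => ⟨hp.1, mem_univ _⟩

end Equicontinuous

def ellisSemigroup (G X : Type*) [SMul G X] [TopologicalSpace X] : Set (X → X) :=
  closure (range fun g : G => (g • · : X → X))

section EllisSemigroup

variable {G X : Type*}

theorem id_mem_ellisSemigroup [Monoid G] [MulAction G X] [TopologicalSpace X] :
    id ∈ ellisSemigroup G X :=
  subset_closure ⟨1, funext (one_smul G)⟩

variable [UniformSpace X]

theorem uniformEquicontinuous_ellisSemigroup [SMul G X]
    (hG : UniformEquicontinuous fun g : G => (g • · : X → X)) :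
    (ellisSemigroup G X).UniformEquicontinuous :=
  (uniformEquicontinuous_iff_range.mp hG).closure

theorem continuousOn_comp_ellisSemigroup [SMul G X]
    (hG : UniformEquicontinuous fun g : G => (g • · : X → X)) :
    ContinuousOn (fun p : (X → X) × (X → X) => p.1 ∘ p.2)
      (ellisSemigroup G X ×ˢ ellisSemigroup G X) :=
  (uniformEquicontinuous_ellisSemigroup hG).equicontinuous.continuousOn_comp.mono
    (prod_mono subset_rfl (subset_univ _))

theorem comp_mem_ellisSemigroup [Monoid G] [MulAction G X]
    (hG : UniformEquicontinuous fun g : G => (g • · : X → X)) {f h : X → X}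
    (hf : f ∈ ellisSemigroup G X) (hh : h ∈ ellisSemigroup G X) :
    f ∘ h ∈ ellisSemigroup G X := by
  set S := range fun g : G => (g • · : X → X)
  have hmaps : MapsTo (fun p : (X → X) × (X → X) => p.1 ∘ p.2) (S ×ˢ S) S := by
    rintro ⟨_, _⟩ ⟨⟨g, rfl⟩, ⟨g', rfl⟩⟩
    exact ⟨g * g', funext (mul_smul g g')⟩
  have hprod : ContinuousOn (fun p : (X → X) × (X → X) => p.1 ∘ p.2) (closure (S ×ˢ S)) := by
    rw [closure_prod_eq]
    exact continuousOn_comp_ellisSemigroup hG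
  have hfh : (f, h) ∈ closure (S ×ˢ S) := by
    rw [closure_prod_eq]
    exact ⟨hf, hh⟩
  exact hmaps.closure_of_continuousOn hprod hfh

theorem exists_comp_eq_id_of_mem_ellisSemigroup [Group G] [MulAction G X] [CompactSpace X]
    [T2Space X] (hG : UniformEquicontinuous fun g : G => (g • · : X → X)) {f : X → X}
    (hf : f ∈ ellisSemigroup G X) :
    ∃ h ∈ ellisSemigroup G X, f ∘ h = id ∧ h ∘ f = id := by
  set T := range fun g : G => ((g • · : X → X), (g⁻¹ • · : X → X))
  have hTE : closure T ⊆ ellisSemigroup G X ×ˢ ellisSemigroup G X := by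
    rw [ellisSemigroup, ← closure_prod_eq]
    exact closure_mono (range_subset_iff.2 fun g => ⟨mem_range_self g, mem_range_self g⁻¹⟩)
  have hswap : MapsTo Prod.swap (closure T) (closure T) := by
    refine MapsTo.closure ?_ continuous_swap
    rintro _ ⟨g, rfl⟩
    exact ⟨g⁻¹, by simp⟩
  have hcomp : MapsTo (fun p : (X → X) × (X → X) => p.1 ∘ p.2) (closure T) {id} := by
    have hT : MapsTo (fun p : (X → X) × (X → X) => p.1 ∘ p.2) T {id} := by
      rintro _ ⟨g, rfl⟩
      exact funext (smul_inv_smul g)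
    simpa only [closure_singleton] using
      hT.closure_of_continuousOn ((continuousOn_comp_ellisSemigroup hG).mono hTE)
  have hfst : ellisSemigroup G X ⊆ Prod.fst '' closure T := by
    refine closure_minimal ?_ (isClosed_closure.isCompact.image continuous_fst).isClosed
    rintro _ ⟨g, rfl⟩
    exact ⟨_, subset_closure (mem_range_self g), rfl⟩
  obtain ⟨⟨f, h⟩, hfh, rfl⟩ := hfst hf
  exact ⟨h, (hTE hfh).2, hcomp hfh, hcomp (hswap hfh)⟩

theorem isHomeomorph_of_mem_ellisSemigroup [Group G] [MulAction G X] [CompactSpace X]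
    [T2Space X] (hG : UniformEquicontinuous fun g : G => (g • · : X → X)) {f : X → X}
    (hf : f ∈ ellisSemigroup G X) : IsHomeomorph f := by
  have hcont : ∀ u ∈ ellisSemigroup G X, Continuous u := fun u hu =>
    ((uniformEquicontinuous_ellisSemigroup hG).uniformContinuous_of_mem hu).continuous
  obtain ⟨h, hh, hfh, hhf⟩ := exists_comp_eq_id_of_mem_ellisSemigroup hG hf
  exact isHomeomorph_iff_exists_inverse.2
    ⟨hcont f hf, h, congrFun hhf, congrFun hfh, hcont h hh⟩

end EllisSemigroup

theorem ellis_semigroup_of_equicontinuous_flow_is_topological_group_general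
    (G : Type*) [Group G]
    (X : Type*) [UniformSpace X] [CompactSpace X] [T2Space X] [MulAction G X]
    (hequi : ∀ α ∈ uniformity X, ∃ β ∈ uniformity X,
      ∀ x y : X, (x, y) ∈ β → ∀ g : G, (g • x, g • y) ∈ α) :
    (id ∈ closure {f : X → X | ∃ g : G, f = fun x => g • x}) ∧
    (∀ f ∈ closure {f : X → X | ∃ g : G, f = fun x => g • x},
      ∀ h ∈ closure {f : X → X | ∃ g : G, f = fun x => g • x},
        f ∘ h ∈ closure {f : X → X | ∃ g : G, f = fun x => g • x}) ∧
    (∀ f ∈ closure {f : X → X | ∃ g : G, f = fun x => g • x}, IsHomeomorph f) ∧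
    (∀ f ∈ closure {f : X → X | ∃ g : G, f = fun x => g • x},
      ∃ h ∈ closure {f : X → X | ∃ g : G, f = fun x => g • x},
        f ∘ h = id ∧ h ∘ f = id) ∧
    Continuous (fun p : closure {f : X → X | ∃ g : G, f = fun x => g • x} ×
        closure {f : X → X | ∃ g : G, f = fun x => g • x} =>
      (p.1 : X → X) ∘ (p.2 : X → X)) := by
  have hG : UniformEquicontinuous fun g : G => (g • · : X → X) := fun α hα =>
    let ⟨β, hβ, hβα⟩ := hequi α hα
    mem_of_superset hβ fun p hp => hβα p.1 p.2 hp
  have hS : {f : X → X | ∃ g : G, f = fun x => g • x} = range fun g : G => (g • · : X → X) := by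
    ext f
    simp only [mem_ofPred_eq, mem_range, eq_comm]
  rw [hS]
  refine ⟨id_mem_ellisSemigroup, fun f hf h hh => comp_mem_ellisSemigroup hG hf hh,
    fun f hf => isHomeomorph_of_mem_ellisSemigroup hG hf,
    fun f hf => exists_comp_eq_id_of_mem_ellisSemigroup hG hf, ?_⟩
  exact (continuousOn_comp_ellisSemigroup hG).comp_continuous
    (continuous_subtype_val.prodMap continuous_subtype_val) fun p => ⟨p.1.2, p.2.2⟩

/-- If a compact Hausdorff `G`-flow `X` is equicontinuous, then its Ellis semigroup
`E(X)` — the closure in `X^X` of the set of translations `x ↦ g • x` — is a group of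
homeomorphisms of `X` under composition, with jointly continuous composition (hence a
compact Hausdorff topological group). -/
theorem ellis_semigroup_of_equicontinuous_flow_is_topological_group
    (G : Type*) [Group G]
    (X : Type*) [UniformSpace X] [CompactSpace X] [T2Space X] [MulAction G X]
    (hcont : ∀ g : G, Continuous fun x : X => g • x)
    (hequi : ∀ α ∈ uniformity X, ∃ β ∈ uniformity X,
      ∀ x y : X, (x, y) ∈ β → ∀ g : G, (g • x, g • y) ∈ α) :
    (id ∈ closure {f : X → X | ∃ g : G, f = fun x => g • x}) ∧
    (∀ f ∈ closure {f : X → X | ∃ g : G, f = fun x => g • x},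
      ∀ h ∈ closure {f : X → X | ∃ g : G, f = fun x => g • x},
        f ∘ h ∈ closure {f : X → X | ∃ g : G, f = fun x => g • x}) ∧
    (∀ f ∈ closure {f : X → X | ∃ g : G, f = fun x => g • x}, IsHomeomorph f) ∧
    (∀ f ∈ closure {f : X → X | ∃ g : G, f = fun x => g • x},
      ∃ h ∈ closure {f : X → X | ∃ g : G, f = fun x => g • x},
        f ∘ h = id ∧ h ∘ f = id) ∧
    Continuous (fun p : closure {f : X → X | ∃ g : G, f = fun x => g • x} ×
        closure {f : X → X | ∃ g : G, f = fun x => g • x} =>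
      (p.1 : X → X) ∘ (p.2 : X → X)) :=
  ellis_semigroup_of_equicontinuous_flow_is_topological_group_general G X hequi
end
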